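/- arXiv:2405.02939 — 2 statements merged into one kernel-verified Lean document; each statement's English description precedes it below -/
import Mathlib

section
/- If λ = (λ_1, ..., λ_n) ∈ Γ_k with λ_1 ≥ ... ≥ λ_n, then at most n - k entries of λ are negative; moreover λ_k + λ_{k+1} + ... + λ_n > 0 and |λ_i| ≤ n · λ_k for every i > k. -/
open Finset

noncomputable def esym {n : ℕ} (k : ℕ) (lam : Fin n → ℝ) : ℝ :=
  ∑ s ∈ Finset.univ.powersetCard k, ∏ i ∈ s, lam i

noncomputable def esym1 {n : ℕ} (k : ℕ) (lam : Fin n → ℝ) (i : Fin n) : ℝ :=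
  ∑ s ∈ (Finset.univ.erase i).powersetCard k, ∏ j ∈ s, lam j

noncomputable def esym2 {n : ℕ} (k : ℕ) (lam : Fin n → ℝ) (i j : Fin n) : ℝ :=
  ∑ s ∈ ((Finset.univ.erase i).erase j).powersetCard k, ∏ l ∈ s, lam l

def GardingCone (n k : ℕ) : Set (Fin n → ℝ) :=
  {lam | ∀ j : ℕ, 1 ≤ j → j ≤ k → 0 < esym j lam}

/-!
With `p_λ(x) = ∏ (x + λ_i) = ∑_j σ_j(λ) x^(n-j)`, the coefficients of `p_λ^(n-k)` are positive
multiples of `σ_k(λ), …, σ_0(λ)`. By Rolle this polynomial has only real roots, so `λ ∈ Γ_k` iff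
all of them are negative. Since `p_λ = (x + a) p_λ'` when `λ'` is `λ` with the entry `a` removed,
a root comparison shows that removing any entry maps `Γ_k` into `Γ_(k-1)`. Removing the `k - 1`
largest entries therefore leaves a vector of `Γ_1`, i.e. `λ_k + ⋯ + λ_n > 0`, and as `λ` is
decreasing this gives `λ_k > 0` together with the bounds on the other entries.
-/

open Polynomial

namespace Multiset

variable {R : Type*} [CommSemiring R]

theorem esymm_zero (s : Multiset R) : s.esymm 0 = 1 := by
  simp [esymm]

theorem esymm_one (s : Multiset R) : s.esymm 1 = s.sum := by
  simp [esymm, powersetCard_one]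

theorem esymm_pos [PartialOrder R] [IsStrictOrderedRing R] {s : Multiset R}
    (hs : ∀ a ∈ s, 0 < a) {j : ℕ} (hj : j ≤ card s) : 0 < s.esymm j := by
  have hne : s.powersetCard j ≠ 0 := by
    rw [← card_pos, card_powersetCard]
    exact Nat.choose_pos hj
  simpa [esymm] using sum_lt_sum_of_nonempty hne (f := fun _ => (0 : R)) (g := prod) fun t ht =>
    prod_pos fun a ha => hs a (mem_of_le (mem_powersetCard.1 ht).1 ha)

end Multiset

namespace Polynomial

theorem eval_pos_of_coeff_nonneg {R : Type*} [CommSemiring R] [PartialOrder R]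
    [IsStrictOrderedRing R] {p : R[X]} (hcoeff : ∀ i, 0 ≤ p.coeff i) (h0 : 0 < p.coeff 0)
    {x : R} (hx : 0 ≤ x) : 0 < p.eval x := by
  rw [eval_eq_sum_range]
  exact sum_pos' (fun i _ => mul_nonneg (hcoeff i) (pow_nonneg hx i))
    ⟨0, by simp, by simpa using h0⟩

theorem splits_derivative {p : ℝ[X]} (hp : p.Splits) : p.derivative.Splits := by
  rw [splits_iff_card_roots] at hp ⊢
  have := p.card_roots_le_derivative
  have := p.derivative.card_roots'
  have := p.natDegree_derivative_le
  omega

theorem splits_iterate_derivative {p : ℝ[X]} (hp : p.Splits) (r : ℕ) :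
    (derivative^[r] p).Splits := by
  induction r with
  | zero => exact hp
  | succ r ih => rw [Function.iterate_succ_apply']; exact splits_derivative ih

theorem Splits.coeff_pos_of_roots_neg {p : ℝ[X]} (hp : p.Splits) (hlc : 0 < p.leadingCoeff)
    (hroots : ∀ z ∈ p.roots, z < 0) {i : ℕ} (hi : i ≤ p.natDegree) : 0 < p.coeff i := by
  rw [coeff_eq_esymm_roots_of_splits hp hi, mul_assoc, ← Multiset.esymm_neg]
  refine mul_pos hlc (Multiset.esymm_pos ?_ ?_)
  · intro y hy
    obtain ⟨z, hz, rfl⟩ := Multiset.mem_map.1 hy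
    exact neg_pos.2 (hroots z hz)
  · rw [Multiset.card_map, ← splits_iff_card_roots.1 hp]
    omega

theorem Splits.eval_pos_of_roots_lt {p : ℝ[X]} (hp : p.Splits) (hlc : 0 < p.leadingCoeff)
    {x : ℝ} (hroots : ∀ z ∈ p.roots, z < x) : 0 < p.eval x := by
  rw [hp.eval_eq_prod_roots]
  exact mul_pos hlc (Multiset.prod_pos fun y hy => by
    obtain ⟨z, hz, rfl⟩ := Multiset.mem_map.1 hy
    exact sub_pos.2 (hroots z hz))

theorem Splits.eval_derivative_pos_of_roots_lt {p : ℝ[X]} (hp : p.Splits)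
    (hlc : 0 < p.leadingCoeff) (hdeg : p.natDegree ≠ 0) {x : ℝ}
    (hroots : ∀ z ∈ p.roots, z < x) : 0 < p.derivative.eval x := by
  classical
  rw [hp.eval_derivative]
  refine mul_pos hlc ?_
  simpa using Multiset.sum_lt_sum_of_nonempty (hp.roots_ne_zero hdeg) (f := fun _ => (0 : ℝ))
    fun z _ => Multiset.prod_pos fun y hy => by
      obtain ⟨w, hw, rfl⟩ := Multiset.mem_map.1 hy
      exact sub_pos.2 (hroots w (Multiset.mem_of_mem_erase hw))

/-- Beyond the largest root of `p'`, `p` is increasing, so `p (x) > 0` forces every root of `p`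
below `x`. -/
theorem Splits.eval_derivative_pos_of_roots_derivative_le {p : ℝ[X]} (hp : p.Splits)
    (hlc : 0 < p.leadingCoeff) (hdeg : p.natDegree ≠ 0) {x : ℝ}
    (hroots : ∀ z ∈ p.derivative.roots, z ≤ x) (hx : 0 < p.eval x) :
    0 < p.derivative.eval x := by
  have hmono : StrictMonoOn p.eval (Set.Ici x) := by
    refine strictMonoOn_of_deriv_pos (convex_Ici x) p.continuous.continuousOn fun y hy => ?_
    rw [interior_Ici, Set.mem_Ioi] at hy
    rw [Polynomial.deriv]
    refine (splits_derivative hp).eval_pos_of_roots_lt ?_ fun z hz => (hroots z hz).trans_lt hy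
    rw [leadingCoeff_derivative]
    exact mul_pos hlc (Nat.cast_pos.2 (Nat.pos_of_ne_zero hdeg))
  refine hp.eval_derivative_pos_of_roots_lt hlc hdeg fun z hz => ?_
  have hz0 : p.eval z = 0 := (mem_roots'.1 hz).2
  by_contra! hxz
  rcases hxz.eq_or_lt with rfl | hlt
  · linarith
  · linarith [hmono Set.self_mem_Ici hxz hlt]

end Polynomial

namespace Multiset

def InGardingCone (k : ℕ) (s : Multiset ℝ) : Prop :=
  ∀ j, 1 ≤ j → j ≤ k → 0 < s.esymm j

noncomputable def prodXAddC (s : Multiset ℝ) : ℝ[X] :=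
  (s.map fun a => X + C a).prod

noncomputable def gardingPoly (k : ℕ) (s : Multiset ℝ) : ℝ[X] :=
  derivative^[card s - k] s.prodXAddC

theorem splits_prodXAddC (s : Multiset ℝ) : s.prodXAddC.Splits :=
  Splits.multisetProd fun _ hf => by
    obtain ⟨a, _, rfl⟩ := mem_map.1 hf
    exact Splits.X_add_C a

theorem prodXAddC_cons (a : ℝ) (s : Multiset ℝ) :
    (a ::ₘ s).prodXAddC = (X + C a) * s.prodXAddC := by
  simp [prodXAddC]

theorem natDegree_prodXAddC (s : Multiset ℝ) : s.prodXAddC.natDegree = card s := by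
  rw [prodXAddC, natDegree_multiset_prod_of_monic _ fun f hf => by
    obtain ⟨a, _, rfl⟩ := mem_map.1 hf
    exact monic_X_add_C a]
  simp

theorem coeff_gardingPoly {k : ℕ} {s : Multiset ℝ} (hk : k ≤ card s) {i : ℕ} (hi : i ≤ k) :
    (s.gardingPoly k).coeff i =
      (i + (card s - k)).descFactorial (card s - k) * s.esymm (k - i) := by
  rw [gardingPoly, coeff_iterate_derivative, prodXAddC, prod_X_add_C_coeff s (by omega),
    nsmul_eq_mul]
  congr 2
  omega

theorem natDegree_gardingPoly {k : ℕ} {s : Multiset ℝ} (hk : k ≤ card s) :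
    (s.gardingPoly k).natDegree = k := by
  refine natDegree_eq_of_le_of_coeff_ne_zero ?_ ?_
  · have := natDegree_iterate_derivative s.prodXAddC (card s - k)
    rw [natDegree_prodXAddC] at this
    unfold gardingPoly
    omega
  · rw [coeff_gardingPoly hk le_rfl, Nat.sub_self, esymm_zero, mul_one, Nat.cast_ne_zero]
    exact (Nat.descFactorial_pos.2 (by omega)).ne'

theorem leadingCoeff_gardingPoly_pos {k : ℕ} {s : Multiset ℝ} (hk : k ≤ card s) :
    0 < (s.gardingPoly k).leadingCoeff := by
  rw [leadingCoeff, natDegree_gardingPoly hk, coeff_gardingPoly hk le_rfl, Nat.sub_self,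
    esymm_zero, mul_one, Nat.cast_pos]
  exact Nat.descFactorial_pos.2 (by omega)

theorem splits_gardingPoly (k : ℕ) (s : Multiset ℝ) : (s.gardingPoly k).Splits :=
  splits_iterate_derivative s.splits_prodXAddC _

theorem derivative_gardingPoly {k : ℕ} {s : Multiset ℝ} (hk : k < card s) :
    derivative (s.gardingPoly (k + 1)) = s.gardingPoly k := by
  rw [gardingPoly, gardingPoly, ← Function.iterate_succ_apply' derivative]
  congr 1
  omega

theorem gardingPoly_cons (k : ℕ) (a : ℝ) (s : Multiset ℝ) :
    (a ::ₘ s).gardingPoly (k + 1) =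
      (X + C a) * s.gardingPoly k + (card s - k) • s.gardingPoly (k + 1) := by
  rw [gardingPoly, gardingPoly, gardingPoly, prodXAddC_cons, card_cons, add_mul,
    iterate_map_add, mul_comm X, iterate_derivative_mul_X, iterate_derivative_C_mul,
    show card s + 1 - (k + 1) = card s - k by omega,
    show card s - (k + 1) = card s - k - 1 by omega]
  ring

theorem InGardingCone.le_card {k : ℕ} {s : Multiset ℝ} (h : s.InGardingCone k) :
    k ≤ card s := by
  by_contra! hk
  have := h k (by omega) le_rfl
  rw [esymm, powersetCard_eq_empty _ hk] at this
  simp at this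

theorem inGardingCone_iff_coeff_gardingPoly_pos {k : ℕ} {s : Multiset ℝ} (hk : k ≤ card s) :
    s.InGardingCone k ↔ ∀ i ≤ k, 0 < (s.gardingPoly k).coeff i := by
  have hcoeff : ∀ i ≤ k, 0 < (s.gardingPoly k).coeff i ↔ 0 < s.esymm (k - i) := fun i hi => by
    rw [coeff_gardingPoly hk hi]
    exact mul_pos_iff_of_pos_left (Nat.cast_pos.2 (Nat.descFactorial_pos.2 (by omega)))
  constructor
  · intro h i hi
    rw [hcoeff i hi]
    rcases hi.eq_or_lt with rfl | hlt
    · simp [esymm_zero]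
    · exact h _ (by omega) (by omega)
  · intro h j hj hjk
    simpa [Nat.sub_sub_self hjk] using (hcoeff (k - j) (by omega)).1 (h (k - j) (by omega))

theorem InGardingCone.eval_gardingPoly_pos {k : ℕ} {s : Multiset ℝ} (h : s.InGardingCone k)
    {x : ℝ} (hx : 0 ≤ x) : 0 < (s.gardingPoly k).eval x := by
  have hk := h.le_card
  have hpos := (inGardingCone_iff_coeff_gardingPoly_pos hk).1 h
  refine eval_pos_of_coeff_nonneg (fun i => ?_) (hpos 0 (Nat.zero_le k)) hx
  rcases le_or_gt i k with hi | hi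
  · exact (hpos i hi).le
  · rw [coeff_eq_zero_of_natDegree_lt (by rwa [natDegree_gardingPoly hk])]

theorem inGardingCone_of_roots_gardingPoly_neg {k : ℕ} {s : Multiset ℝ} (hk : k ≤ card s)
    (hroots : ∀ z ∈ (s.gardingPoly k).roots, z < 0) : s.InGardingCone k :=
  (inGardingCone_iff_coeff_gardingPoly_pos hk).2 fun i hi =>
    (splits_gardingPoly k s).coeff_pos_of_roots_neg (leadingCoeff_gardingPoly_pos hk) hroots
      (by rwa [natDegree_gardingPoly hk])

/-- With `G = gardingPoly k s` and `H = gardingPoly (k + 1) s` we have `G = H'` and, at the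
largest root `ρ` of `G`, `gardingPoly (k + 1) (a ::ₘ s) (ρ) = (card s - k) H(ρ)`; if `ρ ≥ 0`
this is positive, which forces `H'(ρ) > 0`, a contradiction. -/
theorem InGardingCone.of_cons {k : ℕ} {a : ℝ} {s : Multiset ℝ}
    (h : (a ::ₘ s).InGardingCone (k + 1)) : s.InGardingCone k := by
  have hk : k ≤ card s := by simpa using h.le_card
  refine inGardingCone_of_roots_gardingPoly_neg hk fun z hz => ?_
  by_contra! hz0
  obtain ⟨ρ, hρ, hρmax⟩ :=
    (s.gardingPoly k).roots.toFinset.exists_max_image id ⟨z, mem_toFinset.2 hz⟩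
  simp only [mem_toFinset, id] at hρ hρmax
  have hGρ : (s.gardingPoly k).eval ρ = 0 := (mem_roots'.1 hρ).2
  have hF := h.eval_gardingPoly_pos (hz0.trans (hρmax z hz))
  rw [gardingPoly_cons, eval_add, eval_mul, hGρ, mul_zero, zero_add, eval_smul,
    nsmul_eq_mul] at hF
  have hks : k < card s := by
    by_contra! hks
    simp [Nat.sub_eq_zero_of_le hks] at hF
  have hH := pos_of_mul_pos_right hF (Nat.cast_nonneg _)
  have hH' := (splits_gardingPoly (k + 1) s).eval_derivative_pos_of_roots_derivative_le
    (leadingCoeff_gardingPoly_pos hks) (by rw [natDegree_gardingPoly hks]; omega)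
    (by rwa [derivative_gardingPoly hks]) hH
  rw [derivative_gardingPoly hks, hGρ] at hH'
  exact hH'.false

theorem InGardingCone.sum_pos_of_add {k : ℕ} {s t : Multiset ℝ} (h : (s + t).InGardingCone k)
    (hs : card s < k) : 0 < t.sum := by
  induction s using Multiset.induction generalizing k with
  | empty => simpa [esymm_one] using h 1 le_rfl (by simp at hs; omega)
  | cons a s ih =>
    obtain ⟨k, rfl⟩ : ∃ k', k = k' + 1 := ⟨k - 1, by simp at hs; omega⟩
    rw [cons_add] at h
    exact ih h.of_cons (by simpa using hs)

end Multiset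

theorem Finset.neg_lt_card_sub_one_mul_of_sum_pos {ι R : Type*} [DecidableEq ι] [CommRing R]
    [LinearOrder R] [IsStrictOrderedRing R] {s : Finset ι} {f : ι → R} {c : R}
    (hs : 0 < ∑ j ∈ s, f j) (hf : ∀ j ∈ s, f j ≤ c) {i : ι} (hi : i ∈ s) :
    -f i < (#s - 1) * c := by
  rw [← add_sum_erase s f hi] at hs
  have := sum_le_card_nsmul (s.erase i) f c fun j hj => hf j (mem_of_mem_erase hj)
  rw [card_erase_of_mem hi, nsmul_eq_mul, Nat.cast_sub (card_pos.2 ⟨i, hi⟩), Nat.cast_one] at this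
  linarith

theorem Fin.card_filter_le_val (n m : ℕ) : #{i : Fin n | m ≤ (i : ℕ)} = n - m := by
  have := card_filter_add_card_filter_not (s := univ) fun i : Fin n => (i : ℕ) < m
  simp only [not_lt, card_univ, Fintype.card_fin, Fin.card_filter_val_lt] at this
  omega

theorem mem_gardingCone_iff {n k : ℕ} {lam : Fin n → ℝ} :
    lam ∈ GardingCone n k ↔ (univ.val.map lam).InGardingCone k := by
  simp only [Multiset.InGardingCone, Finset.esymm_map_val]
  rfl

theorem sum_filter_pos_of_mem_gardingCone {n k : ℕ} {lam : Fin n → ℝ}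
    (hG : lam ∈ GardingCone n k) (hk : 1 ≤ k) :
    0 < ∑ i ∈ univ.filter (fun i : Fin n => k - 1 ≤ (i : ℕ)), lam i := by
  have hsplit : univ.val.map lam =
      (univ.filter fun i : Fin n => (i : ℕ) < k - 1).val.map lam +
        (univ.filter fun i : Fin n => k - 1 ≤ (i : ℕ)).val.map lam := by
    rw [← Multiset.map_add, filter_val, filter_val]
    simpa only [not_lt] using congrArg (Multiset.map lam)
      (Multiset.filter_add_not (fun i : Fin n => (i : ℕ) < k - 1) univ.val).symm
  rw [mem_gardingCone_iff, hsplit] at hG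
  exact hG.sum_pos_of_add (by rw [Multiset.card_map, card_val, Fin.card_filter_val_lt]; omega)

theorem stmt7 {n : ℕ} (k : ℕ) (hk : 1 ≤ k) (hkn : k ≤ n) (lam : Fin n → ℝ)
    (hG : lam ∈ GardingCone n k) (hsort : Antitone lam) :
    (Finset.univ.filter (fun i : Fin n => lam i < 0)).card ≤ n - k ∧
    0 < ∑ i ∈ Finset.univ.filter (fun i : Fin n => k - 1 ≤ (i : ℕ)), lam i ∧
    ∀ i : Fin n, k ≤ (i : ℕ) → |lam i| ≤ (n : ℝ) * lam ⟨k - 1, by omega⟩ := by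
  set T := univ.filter fun i : Fin n => k - 1 ≤ (i : ℕ)
  have htail : 0 < ∑ i ∈ T, lam i := sum_filter_pos_of_mem_gardingCone hG hk
  have hle : ∀ i ∈ T, lam i ≤ lam ⟨k - 1, by omega⟩ := fun i hi =>
    hsort (Fin.le_def.2 (mem_filter.1 hi).2)
  have hpos : 0 < lam ⟨k - 1, by omega⟩ := by
    have := htail.trans_le (sum_le_card_nsmul T lam _ hle)
    rw [nsmul_eq_mul] at this
    exact pos_of_mul_pos_right this (Nat.cast_nonneg _)
  refine ⟨?_, htail, fun i hi => abs_le.2 ⟨?_, ?_⟩⟩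
  · calc #{i | lam i < 0} ≤ #{i : Fin n | k ≤ (i : ℕ)} := card_le_card fun i hi => by
          simp only [mem_filter, mem_univ, true_and] at hi ⊢
          by_contra! hik
          exact (hpos.trans_le (hsort (Fin.le_def.2 (by simp; omega)))).not_gt hi
      _ = n - k := Fin.card_filter_le_val n k
  · have hneg :=
      neg_lt_card_sub_one_mul_of_sum_pos htail hle (mem_filter.2 ⟨mem_univ i, by omega⟩)
    have hcard : (#T : ℝ) - 1 ≤ n := by
      rw [Fin.card_filter_le_val]
      have : ((n - (k - 1) : ℕ) : ℝ) ≤ n := Nat.cast_le.2 (Nat.sub_le n _)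
      linarith
    nlinarith
  · have hn : (1 : ℝ) ≤ n := by exact_mod_cast (show 1 ≤ n by omega)
    nlinarith [hle i (mem_filter.2 ⟨mem_univ i, by omega⟩)]
end

section
/- For λ ∈ Γ_k, the sum Σ_{i=1}^n ∂(σ_k^{1/k})/∂λ_i is at least C(n,k)^{1/k}, where C(n,k) is the binomial coefficient. -/
open Finset

/-! The sum of the partial derivatives of `σₖ^{1/k}` is its derivative along `(1, …, 1)`, namely
`(1/k) σₖ^{1/k - 1} (n - k + 1) σₖ₋₁`, since `∂σₖ/∂λᵢ = σₖ₋₁(λ | i)`. In terms of the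
normalized means `Eⱼ = σⱼ / C(n, j)` this is `C(n, k)^{1/k} Eₖ₋₁ Eₖ^{1/k - 1}`, so the claim is
Maclaurin's inequality `Eₖ^{(k-1)/k} ≤ Eₖ₋₁`, valid on `Γₖ` where `E₀, …, Eₖ > 0`. Maclaurin
follows by induction from Newton's inequalities `Eⱼ Eⱼ₊₂ ≤ Eⱼ₊₁²`, which hold for every real
multiset: by Rolle, the roots of the derivative of `∏ (X - λᵢ)` form a real multiset of one
element fewer with the same means `Eⱼ`, which reduces Newton to `n = j + 2`. There, with
`aᵢ = ∏_{l ≠ i} λₗ`, one has `σⱼ₊₁ = ∑ aᵢ` and `2 σⱼ σⱼ₊₂ = (∑ aᵢ)² - ∑ aᵢ²`, and Cauchy–Schwarz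
concludes. -/

namespace Finset

variable {ι M R : Type*} [DecidableEq ι]

section AddCommMonoid

variable [AddCommMonoid M]

theorem sum_sum_powersetCard_erase (u : Finset ι) (m : ℕ) (g : Finset ι → M) :
    ∑ i ∈ u, ∑ t ∈ (u.erase i).powersetCard m, g t = (#u - m) • ∑ t ∈ u.powersetCard m, g t := by
  rw [sum_comm' (t' := u.powersetCard m) (s' := fun t => u \ t) (by
    intro i t
    simp only [mem_powersetCard, subset_erase, mem_sdiff]
    tauto), smul_sum]
  refine sum_congr rfl fun t ht => ?_
  rw [mem_powersetCard] at ht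
  rw [sum_const, card_sdiff_of_subset ht.1, ht.2]

theorem sum_powersetCard_succ_sum_erase (u : Finset ι) (m : ℕ) (f : Finset ι → ι → M) :
    ∑ s ∈ u.powersetCard (m + 1), ∑ i ∈ s, f (s.erase i) i =
      ∑ i ∈ u, ∑ t ∈ (u.erase i).powersetCard m, f t i := by
  rw [sum_comm' (t' := u) (s' := fun i => (u.powersetCard (m + 1)).filter (i ∈ ·)) (by
    intro s i
    simp only [mem_filter]
    constructor
    · rintro ⟨hs, hi⟩; exact ⟨⟨hs, hi⟩, (mem_powersetCard.1 hs).1 hi⟩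
    · rintro ⟨⟨hs, hi⟩, -⟩; exact ⟨hs, hi⟩)]
  refine sum_congr rfl fun i hi => ?_
  refine sum_nbij' (·.erase i) (insert i) ?_ ?_ ?_ ?_ fun _ _ => rfl
  · intro s hs
    simp only [mem_filter, mem_powersetCard] at hs ⊢
    exact ⟨erase_subset_erase i hs.1.1, by rw [card_erase_of_mem hs.2, hs.1.2]; rfl⟩
  · intro t ht
    simp only [mem_filter, mem_powersetCard, subset_erase] at ht ⊢
    exact ⟨⟨insert_subset hi ht.1.1, by rw [card_insert_of_notMem ht.1.2, ht.2]⟩,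
      mem_insert_self i t⟩
  · intro s hs
    exact insert_erase (mem_filter.1 hs).2
  · intro t ht
    exact erase_insert (subset_erase.1 (mem_powersetCard.1 ht).1).2

theorem sum_powersetCard_card_sub_one {u : Finset ι} {m : ℕ} (hu : #u = m + 1)
    (g : Finset ι → M) :
    ∑ t ∈ u.powersetCard m, g t = ∑ i ∈ u, g (u.erase i) := by
  have h := sum_sum_powersetCard_erase u m g
  rw [hu, Nat.add_sub_cancel_left, one_smul] at h
  rw [← h]
  refine sum_congr rfl fun i hi => ?_
  have hcard : #(u.erase i) = m := by rw [card_erase_of_mem hi, hu, Nat.add_sub_cancel]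
  rw [← hcard, powersetCard_self, sum_singleton]

end AddCommMonoid

theorem prod_erase_mul_prod_erase [CommMonoid R] {u : Finset ι} {i j : ι} (hi : i ∈ u)
    (hj : j ∈ u.erase i) (x : ι → R) :
    (∏ l ∈ u.erase i, x l) * ∏ l ∈ u.erase j, x l =
      (∏ l ∈ u, x l) * ∏ l ∈ (u.erase i).erase j, x l := by
  have hij : i ∈ u.erase j := mem_erase.2 ⟨(ne_of_mem_erase hj).symm, hi⟩
  have hi' : ∏ l ∈ u.erase i, x l = x j * ∏ l ∈ (u.erase i).erase j, x l :=
    (mul_prod_erase _ _ hj).symm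
  have hj' : ∏ l ∈ u.erase j, x l = x i * ∏ l ∈ (u.erase i).erase j, x l := by
    rw [← mul_prod_erase _ _ hij, erase_right_comm]
  rw [← mul_prod_erase _ _ hi, hi', hj']
  ac_rfl

theorem sum_sum_prod_erase_erase [CommSemiring R] {u : Finset ι} {m : ℕ} (hu : #u = m + 2)
    (x : ι → R) :
    ∑ i ∈ u, ∑ j ∈ u.erase i, ∏ l ∈ (u.erase i).erase j, x l =
      2 * ∑ t ∈ u.powersetCard m, ∏ l ∈ t, x l := by
  have hinner : ∀ i ∈ u, ∑ j ∈ u.erase i, ∏ l ∈ (u.erase i).erase j, x l =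
      ∑ t ∈ (u.erase i).powersetCard m, ∏ l ∈ t, x l := fun i hi =>
    (sum_powersetCard_card_sub_one (by rw [card_erase_of_mem hi, hu]; rfl)
      fun t => ∏ l ∈ t, x l).symm
  rw [sum_congr rfl hinner, sum_sum_powersetCard_erase, hu, show m + 2 - m = 2 by omega,
    nsmul_eq_mul, Nat.cast_ofNat]

theorem esymm_mul_esymm_le_of_card_eq {u : Finset ι} {m : ℕ} (hu : #u = m + 2) (x : ι → ℝ) :
    2 * (m + 2) * ((u.val.map x).esymm m * (u.val.map x).esymm (m + 2)) ≤
      (m + 1) * (u.val.map x).esymm (m + 1) ^ 2 := by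
  simp only [esymm_map_val]
  set a : ι → ℝ := fun i => ∏ j ∈ u.erase i, x j
  have htop : ∑ t ∈ u.powersetCard (m + 2), ∏ j ∈ t, x j = ∏ j ∈ u, x j := by
    rw [← hu, powersetCard_self, sum_singleton]
  have hpairs : ∑ i ∈ u, ∑ j ∈ u.erase i, a i * a j =
      2 * ((∑ t ∈ u.powersetCard m, ∏ j ∈ t, x j) * ∏ j ∈ u, x j) := by
    rw [sum_congr rfl fun i hi => sum_congr rfl fun j hj => prod_erase_mul_prod_erase hi hj x]
    simp only [← mul_sum]
    rw [sum_sum_prod_erase_erase hu]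
    ring
  have hpairs' : ∑ i ∈ u, ∑ j ∈ u.erase i, a i * a j = (∑ i ∈ u, a i) ^ 2 - ∑ i ∈ u, a i ^ 2 := by
    rw [sum_congr rfl fun i hi => by rw [← mul_sum, sum_erase_eq_sub hi]]
    simp only [mul_sub, sum_sub_distrib, ← sum_mul, sq]
  have hcs := sq_sum_le_card_mul_sum_sq (s := u) (f := a)
  rw [hu] at hcs
  push_cast at hcs
  rw [htop, sum_powersetCard_card_sub_one (m := m + 1) hu fun t => ∏ j ∈ t, x j]
  nlinarith

end Finset

theorem sum_esym1 {n : ℕ} (m : ℕ) (lam : Fin n → ℝ) :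
    ∑ i, esym1 m lam i = ((n - m : ℕ) : ℝ) * esym m lam := by
  simp only [esym1, esym]
  rw [sum_sum_powersetCard_erase, card_univ, Fintype.card_fin, nsmul_eq_mul]

theorem hasFDerivAt_esym {n : ℕ} (m : ℕ) (lam : Fin n → ℝ) :
    HasFDerivAt (esym (m + 1))
      (∑ i, esym1 m lam i • ContinuousLinearMap.proj (R := ℝ) (φ := fun _ : Fin n => ℝ) i) lam := by
  have h := HasFDerivAt.fun_sum (u := univ.powersetCard (m + 1))
    (A := fun s (μ : Fin n → ℝ) => ∏ i ∈ s, μ i) (x := lam)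
    fun s _ => hasFDerivAt_finsetProd (𝕜 := ℝ) (u := s) (x := lam)
  rw [sum_powersetCard_succ_sum_erase univ m fun t (i : Fin n) =>
    (∏ j ∈ t, lam j) • ContinuousLinearMap.proj (R := ℝ) (φ := fun _ => ℝ) i] at h
  simp only [esym1, sum_smul]
  exact h

theorem sum_fderiv_esym_rpow {n : ℕ} (m : ℕ) {lam : Fin n → ℝ} (hσ : esym (m + 1) lam ≠ 0)
    (r : ℝ) :
    ∑ i, fderiv ℝ (fun μ => esym (m + 1) μ ^ r) lam (Pi.single i 1) =
      r * esym (m + 1) lam ^ (r - 1) * (((n - m : ℕ) : ℝ) * esym m lam) := by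
  have h : HasFDerivAt (fun μ => esym (m + 1) μ ^ r) _ lam :=
    (Real.hasDerivAt_rpow_const (p := r) (Or.inl hσ)).comp_hasFDerivAt lam
    (hasFDerivAt_esym m lam)
  rw [h.fderiv, ← sum_esym1, mul_sum]
  refine sum_congr rfl fun i _ => ?_
  simp [Pi.single_apply]

namespace Multiset

open Polynomial in
theorem exists_card_eq_esymm_roots_derivative (s : Multiset ℝ) {N : ℕ}
    (hs : card s = N + 1) :
    ∃ t : Multiset ℝ, card t = N ∧
      ∀ i ≤ N, ((N + 1 : ℕ) : ℝ) * t.esymm i = ((N + 1 - i : ℕ) : ℝ) * s.esymm i := by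
  set P : ℝ[X] := (s.map fun x => X - C x).prod
  have hP : P.natDegree = N + 1 := by rw [natDegree_multiset_prod_X_sub_C_eq_card, hs]
  have hP' : (derivative P).natDegree ≤ N := by
    have := natDegree_derivative_le P
    omega
  -- Rolle: `P` has `N + 1` real roots, so `P'` has at least `N`.
  have hcard : card (derivative P).roots = N := by
    have := P.card_roots_le_derivative
    rw [roots_multiset_prod_X_sub_C, hs] at this
    exact le_antisymm ((card_roots' _).trans hP') (by omega)
  have hdeg : (derivative P).natDegree = N := le_antisymm hP' (hcard ▸ card_roots' _)
  have hlead : (derivative P).leadingCoeff = ((N + 1 : ℕ) : ℝ) := by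
    rw [leadingCoeff, hdeg, coeff_derivative, ← hP,
      (monic_multiset_prod_of_monic _ _ fun x _ => monic_X_sub_C x).coeff_natDegree, hP]
    push_cast
    ring
  refine ⟨_, hcard, fun i hi => ?_⟩
  have hcoeff := coeff_derivative P (N - i)
  rw [coeff_eq_esymm_roots_of_card (hcard.trans hdeg.symm) (hdeg ▸ Nat.sub_le N i), hlead, hdeg,
    Nat.sub_sub_self hi, prod_X_sub_C_coeff s (by omega), hs,
    show N + 1 - (N - i + 1) = i by omega] at hcoeff
  have hsign : ((-1 : ℝ) ^ i) ^ 2 = 1 := by rw [← pow_mul, mul_comm, pow_mul, neg_one_sq, one_pow]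
  rw [show N + 1 - i = N - i + 1 by omega]
  push_cast at hcoeff ⊢
  linear_combination (-1 : ℝ) ^ i * hcoeff
    + ((((N - i : ℕ) : ℝ) + 1) * s.esymm i - (N + 1) * (derivative P).roots.esymm i) * hsign

noncomputable def esymmMean (s : Multiset ℝ) (i : ℕ) : ℝ :=
  s.esymm i / (card s).choose i

@[simp]
theorem esymmMean_zero (s : Multiset ℝ) : s.esymmMean 0 = 1 := by
  simp [esymmMean, esymm]

theorem exists_card_eq_esymmMean_eq (s : Multiset ℝ) {N : ℕ} (hs : card s = N + 1) :
    ∃ t : Multiset ℝ, card t = N ∧ ∀ i ≤ N, t.esymmMean i = s.esymmMean i := by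
  obtain ⟨t, ht, hesymm⟩ := s.exists_card_eq_esymm_roots_derivative hs
  refine ⟨t, ht, fun i hi => ?_⟩
  have hchoose : (N.choose i : ℝ) * (N + 1) = (N + 1).choose i * ((N + 1 - i : ℕ) : ℝ) := by
    exact_mod_cast Nat.choose_mul_succ_eq N i
  have hpos : (0 : ℝ) < ((N + 1 - i : ℕ) : ℝ) := by norm_cast; omega
  have hN : (0 : ℝ) < N.choose i := by exact_mod_cast Nat.choose_pos hi
  have hN1 : (0 : ℝ) < (N + 1).choose i := by exact_mod_cast Nat.choose_pos (by omega)
  rw [esymmMean, esymmMean, ht, hs, div_eq_div_iff hN.ne' hN1.ne']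
  push_cast at hesymm hchoose
  refine mul_right_cancel₀ hpos.ne' ?_
  linear_combination (N.choose i : ℝ) * hesymm i hi - t.esymm i * hchoose

theorem esymmMean_mul_le_sq_of_card_eq (s : Multiset ℝ) {m : ℕ} (hs : card s = m + 2) :
    s.esymmMean m * s.esymmMean (m + 2) ≤ s.esymmMean (m + 1) ^ 2 := by
  classical
  have h := Finset.esymm_mul_esymm_le_of_card_eq (u := (Finset.univ : Finset s))
    (by rw [Finset.card_univ, card_coe, hs]) (fun x : s => (x : ℝ))
  rw [map_univ_coe] at h
  have hchoose : ((m + 2).choose m : ℝ) = (m + 2) * (m + 1) / 2 := by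
    have h := Nat.choose_succ_right_eq (m + 2) m
    rw [Nat.choose_succ_self_right, show m + 2 - m = 2 by omega] at h
    rw [eq_div_iff two_ne_zero]
    exact_mod_cast h.symm
  rw [esymmMean, esymmMean, esymmMean, hs, Nat.choose_self, Nat.choose_succ_self_right, hchoose,
    div_pow, div_mul_div_comm, div_le_div_iff₀ (by positivity) (by positivity)]
  push_cast
  nlinarith [mul_le_mul_of_nonneg_left h (by positivity : (0 : ℝ) ≤ m + 2)]

theorem esymmMean_mul_le_sq (s : Multiset ℝ) {j : ℕ} (hj : j + 2 ≤ card s) :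
    s.esymmMean j * s.esymmMean (j + 2) ≤ s.esymmMean (j + 1) ^ 2 := by
  obtain ⟨d, hd⟩ := Nat.exists_eq_add_of_le hj
  clear hj
  induction d generalizing s with
  | zero => exact s.esymmMean_mul_le_sq_of_card_eq hd
  | succ d ih =>
    obtain ⟨t, ht, hmean⟩ := s.exists_card_eq_esymmMean_eq (N := j + 2 + d) hd
    rw [← hmean j (by omega), ← hmean (j + 1) (by omega), ← hmean (j + 2) (by omega)]
    exact ih t ht

end Multiset

theorem pow_succ_le_pow_of_mul_le_sq {p : ℕ → ℝ} {k : ℕ} (h0 : p 0 = 1)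
    (hpos : ∀ j ≤ k, 0 < p j) (hconc : ∀ j, j + 2 ≤ k → p j * p (j + 2) ≤ p (j + 1) ^ 2) :
    ∀ j, j + 1 ≤ k → p (j + 1) ^ j ≤ p j ^ (j + 1)
  | 0, _ => by simp [h0]
  | j + 1, hj => by
    have ih := pow_succ_le_pow_of_mul_le_sq h0 hpos hconc j (by omega)
    have hj0 := hpos j (by omega)
    have hj2 := hpos (j + 2) hj
    refine le_of_mul_le_mul_left ?_ (pow_pos (hpos (j + 1) (by omega)) j)
    calc p (j + 1) ^ j * p (j + 2) ^ (j + 1)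
        ≤ p j ^ (j + 1) * p (j + 2) ^ (j + 1) := by gcongr
      _ = (p j * p (j + 2)) ^ (j + 1) := (mul_pow _ _ _).symm
      _ ≤ (p (j + 1) ^ 2) ^ (j + 1) := by gcongr; exact hconc j hj
      _ = p (j + 1) ^ j * p (j + 1) ^ (j + 2) := by ring

theorem esym_eq_choose_mul_esymmMean {n : ℕ} {k : ℕ} (hk : k ≤ n) (lam : Fin n → ℝ) :
    esym k lam = n.choose k * (univ.val.map lam).esymmMean k := by
  have hC : (n.choose k : ℝ) ≠ 0 := by exact_mod_cast (Nat.choose_pos hk).ne'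
  rw [Multiset.esymmMean, Finset.esymm_map_val, Multiset.card_map, card_val, card_univ,
    Fintype.card_fin, mul_div_cancel₀ _ hC]
  rfl

section GardingCone

variable {n k : ℕ} {lam : Fin n → ℝ}

theorem esymmMean_pos_of_mem_gardingCone (hkn : k ≤ n) (hG : lam ∈ GardingCone n k) {j : ℕ}
    (hj : j ≤ k) : 0 < (univ.val.map lam).esymmMean j := by
  rcases Nat.eq_zero_or_pos j with rfl | hj0
  · simp
  · have h := hG j hj0 hj
    rw [esym_eq_choose_mul_esymmMean (hj.trans hkn)] at h
    exact pos_of_mul_pos_right h (Nat.cast_nonneg _)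

theorem esymmMean_pow_le_of_mem_gardingCone (hkn : k + 1 ≤ n)
    (hG : lam ∈ GardingCone n (k + 1)) :
    (univ.val.map lam).esymmMean (k + 1) ^ k ≤ (univ.val.map lam).esymmMean k ^ (k + 1) :=
  pow_succ_le_pow_of_mul_le_sq (Multiset.esymmMean_zero _)
    (fun _ hj => esymmMean_pos_of_mem_gardingCone hkn hG hj)
    (fun _ hj => Multiset.esymmMean_mul_le_sq _ (by simp; omega)) k le_rfl

end GardingCone

theorem le_mul_rpow_of_pow_le_pow_succ {a b : ℝ} {m : ℕ} (ha : 0 ≤ a) (hb : 0 ≤ b)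
    (h : b ^ m ≤ a ^ (m + 1)) : b ≤ a * b ^ ((1 : ℝ) / (m + 1 : ℕ)) := by
  refine le_of_pow_le_pow_left₀ m.succ_ne_zero (by positivity) ?_
  calc b ^ (m + 1) = b ^ m * b := pow_succ _ _
    _ ≤ a ^ (m + 1) * b := by gcongr
    _ = (a * b ^ ((1 : ℝ) / (m + 1 : ℕ))) ^ (m + 1) := by
      rw [mul_pow, one_div, Real.rpow_inv_natCast_pow hb m.succ_ne_zero]

theorem stmt10 {n : ℕ} (k : ℕ) (hk : 1 ≤ k) (hkn : k ≤ n) (lam : Fin n → ℝ)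
    (hG : lam ∈ GardingCone n k) :
    ∑ i : Fin n,
        fderiv ℝ (fun μ : Fin n → ℝ => esym k μ ^ ((1 : ℝ) / k)) lam (Pi.single i 1) ≥
      (n.choose k : ℝ) ^ ((1 : ℝ) / k) := by
  obtain ⟨m, rfl⟩ : ∃ m, k = m + 1 := ⟨k - 1, by omega⟩
  have hchoose : (n.choose (m + 1) : ℝ) * (m + 1) = n.choose m * ((n - m : ℕ) : ℝ) := by
    exact_mod_cast Nat.choose_succ_right_eq n m
  have ha := esymmMean_pos_of_mem_gardingCone hkn hG (Nat.le_succ m)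
  have hb := esymmMean_pos_of_mem_gardingCone hkn hG le_rfl
  have hab := le_mul_rpow_of_pow_le_pow_succ ha.le hb.le
    (esymmMean_pow_le_of_mem_gardingCone hkn hG)
  set a := (univ.val.map lam).esymmMean m
  set b := (univ.val.map lam).esymmMean (m + 1)
  set C : ℝ := ↑(n.choose (m + 1))
  have hC : 0 < C := Nat.cast_pos.2 (Nat.choose_pos hkn)
  have hσ : esym (m + 1) lam = C * b := esym_eq_choose_mul_esymmMean hkn lam
  have hσ' : ((n - m : ℕ) : ℝ) * esym m lam = (m + 1) * C * a := by
    rw [esym_eq_choose_mul_esymmMean (by omega)]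
    linear_combination -a * hchoose
  rw [ge_iff_le, sum_fderiv_esym_rpow m (hG _ hk le_rfl).ne', hσ, hσ',
    Real.rpow_sub_one (by positivity), Real.mul_rpow hC.le hb.le]
  calc C ^ ((1 : ℝ) / (m + 1 : ℕ))
      = C ^ ((1 : ℝ) / (m + 1 : ℕ)) * b / b := (mul_div_cancel_right₀ _ hb.ne').symm
    _ ≤ C ^ ((1 : ℝ) / (m + 1 : ℕ)) * (a * b ^ ((1 : ℝ) / (m + 1 : ℕ))) / b := by gcongr
    _ = _ := by
      field_simp
      push_cast
      ring
end
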